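/- arXiv:2306.07039 — 3 statements merged into one kernel-verified Lean document; each statement's English description precedes it below -/
import Mathlib

section
/- Let p be a prime, c ≥ 1 an integer, and n a positive integer. Let h = (h_{ij}) ∈ GL_n(ℤ_p) be a matrix satisfying: (a) h_{ij} ∈ p^{|i-j|c}ℤ_p for all i ≠ j, and (b) h_{i1} + h_{i2} + ... + h_{in} - 1 ∈ p^{ic}ℤ_p for all 1 ≤ i ≤ n. Then det(h) ∈ 1 + p^c ℤ_p. -/
/-! Both congruence conditions say that `h ≡ 1` entrywise modulo `p ^ c`: off the diagonal
this is (a), since `|i - j| ≥ 1`, and on the diagonal it follows from the row-sum condition (b)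
for row `i`, after subtracting the off-diagonal entries. Reducing modulo `p ^ c`, `h` becomes the
identity matrix, so `det h ≡ 1`. -/

namespace Matrix

variable {R ι : Type*} [CommRing R] [Fintype ι] [DecidableEq ι]

theorem det_sub_one_mem_of_forall_sub_one_mem (I : Ideal R) (M : Matrix ι ι R)
    (hM : ∀ i j, (M - 1) i j ∈ I) : M.det - 1 ∈ I := by
  have hM_mod : M.map (Ideal.Quotient.mk I) = 1 := by
    ext i j
    rw [← Matrix.map_one _ (map_zero (Ideal.Quotient.mk I)) (map_one (Ideal.Quotient.mk I)),
      map_apply, map_apply, Ideal.Quotient.eq]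
    exact hM i j
  rw [← Ideal.Quotient.eq, RingHom.map_det, RingHom.mapMatrix_apply, hM_mod, det_one, map_one]

theorem dvd_det_sub_one_of_forall_dvd_sub_one (a : R) (M : Matrix ι ι R)
    (hM : ∀ i j, a ∣ (M - 1) i j) : a ∣ M.det - 1 :=
  Ideal.mem_span_singleton.mp <| det_sub_one_mem_of_forall_sub_one_mem _ M fun i j =>
    Ideal.mem_span_singleton.mpr (hM i j)

theorem dvd_diag_sub_one_of_dvd_sum_sub_one {a : R} {M : Matrix ι ι R} {i : ι}
    (hrow : a ∣ ∑ j, M i j - 1) (hoff : ∀ j, j ≠ i → a ∣ M i j) : a ∣ M i i - 1 := by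
  rw [← Finset.add_sum_erase _ _ (Finset.mem_univ i)] at hrow
  have hrest : a ∣ ∑ j ∈ Finset.univ.erase i, M i j :=
    Finset.dvd_sum fun j hj => hoff j (Finset.ne_of_mem_erase hj)
  simpa using dvd_sub hrow hrest

end Matrix

theorem stmt2_general (p : ℕ) [Fact p.Prime] (c n : ℕ)
    (h : Matrix.GeneralLinearGroup (Fin n) ℤ_[p])
    (ha : ∀ i j : Fin n, i ≠ j →
      ((p : ℤ_[p]) ^ ((((i : ℕ) : ℤ) - ((j : ℕ) : ℤ)).natAbs * c)) ∣
        (h : Matrix (Fin n) (Fin n) ℤ_[p]) i j)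
    (hb : ∀ i : Fin n, ((p : ℤ_[p]) ^ (((i : ℕ) + 1) * c)) ∣
      ((∑ j, (h : Matrix (Fin n) (Fin n) ℤ_[p]) i j) - 1)) :
    ((p : ℤ_[p]) ^ c) ∣ ((h : Matrix (Fin n) (Fin n) ℤ_[p]).det - 1) := by
  set M : Matrix (Fin n) (Fin n) ℤ_[p] := ↑h
  have hoff : ∀ i j : Fin n, i ≠ j → (p : ℤ_[p]) ^ c ∣ M i j :=
    fun i j hij => (pow_dvd_pow _ (Nat.le_mul_of_pos_left c (by omega))).trans (ha i j hij)
  have hdiag : ∀ i : Fin n, (p : ℤ_[p]) ^ c ∣ M i i - 1 :=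
    fun i => Matrix.dvd_diag_sub_one_of_dvd_sum_sub_one
      ((pow_dvd_pow _ (Nat.le_mul_of_pos_left c i.val.succ_pos)).trans (hb i))
      fun j hji => hoff i j hji.symm
  refine Matrix.dvd_det_sub_one_of_forall_dvd_sub_one _ M fun i j => ?_
  rcases eq_or_ne i j with rfl | hij
  · simpa using hdiag i
  · simpa [Matrix.one_apply_ne hij] using hoff i j hij

/-- Congruence conditions on a matrix `h ∈ GL_n(ℤ_p)` force `det h ∈ 1 + p^c ℤ_p`. -/
theorem stmt2 (p : ℕ) [Fact p.Prime] (c n : ℕ) (hc : 1 ≤ c) (hn : 0 < n)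
    (h : Matrix.GeneralLinearGroup (Fin n) ℤ_[p])
    (ha : ∀ i j : Fin n, i ≠ j →
      ((p : ℤ_[p]) ^ ((((i : ℕ) : ℤ) - ((j : ℕ) : ℤ)).natAbs * c)) ∣
        (h : Matrix (Fin n) (Fin n) ℤ_[p]) i j)
    (hb : ∀ i : Fin n, ((p : ℤ_[p]) ^ (((i : ℕ) + 1) * c)) ∣
      ((∑ j, (h : Matrix (Fin n) (Fin n) ℤ_[p]) i j) - 1)) :
    ((p : ℤ_[p]) ^ c) ∣ ((h : Matrix (Fin n) (Fin n) ℤ_[p]).det - 1) :=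
  stmt2_general p c n h ha hb
end

section
/- Let p be a prime, c ≥ 1, and n ≥ 1. Define K_c to be the set of matrices h ∈ GL_n(ℤ_p) satisfying h_{ij} ∈ p^{|i-j|c}ℤ_p for i ≠ j and h_{i1} + ... + h_{in} - 1 ∈ p^{ic}ℤ_p for 1 ≤ i ≤ n. Then K_c is a subgroup of GL_n(ℤ_p), K_{c+1} ⊆ K_c, and the index [K_c : K_{c+1}] equals p^{n(n+1)(2n+1)/6}. -/
/-!
Reduce modulo `p ^ N`, with `N` at least every exponent occurring. The kernel of
`GL_n(ℤ_p) → GL_n(ℤ/p^N)` lies in both groups, so the index is the quotient of the orders of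
the images. The image of `K_c` is the set of all matrices mod `p ^ N` satisfying the
congruences: such a matrix is `≡ 1 mod p`, so any lift of it is invertible. Replacing each
diagonal entry by its row sum minus one identifies this set with a product of the ideals
`p ^ e_ij ℤ/p^N`, of order `p ^ ∑ (N - e_ij)`. Hence the index is `p ^ ∑ e_ij`, where
`e_ij = |i - j|` off the diagonal and `e_ii = i`; the entries with `max i j = m` sum to `m ^ 2`.
-/

open Finset

theorem RingHom.map_dvd_map_iff {R S : Type*} [CommRing R] [CommRing S] {f : R →+* S}
    (hf : Function.Surjective f) {d x : R} (hker : RingHom.ker f ≤ Ideal.span {d}) :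
    f d ∣ f x ↔ d ∣ x := by
  refine ⟨fun ⟨y, hy⟩ => ?_, map_dvd f⟩
  obtain ⟨y, rfl⟩ := hf y
  have hdvd : d ∣ x - d * y :=
    Ideal.mem_span_singleton.mp (hker (by rw [RingHom.mem_ker, map_sub, map_mul, hy, sub_self]))
  simpa using hdvd.add (dvd_mul_right d y)

theorem ZMod.card_natCast_dvd {m d : ℕ} [NeZero m] (hd : d ∣ m) :
    Nat.card {x : ZMod m // (d : ZMod m) ∣ x} = m / d := by
  have hmem (x : ZMod m) : (d : ZMod m) ∣ x ↔ x ∈ AddSubgroup.zmultiples (d : ZMod m) := by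
    rw [AddSubgroup.mem_zmultiples_iff]
    constructor
    · rintro ⟨y, rfl⟩
      obtain ⟨k, rfl⟩ := ZMod.intCast_surjective y
      exact ⟨k, by rw [zsmul_eq_mul, mul_comm]⟩
    · rintro ⟨k, rfl⟩
      exact ⟨k, by rw [zsmul_eq_mul, mul_comm]⟩
  rw [Nat.card_congr (Equiv.subtypeEquivRight hmem), Nat.card_zmultiples,
    ZMod.addOrderOf_coe _ (NeZero.ne m), Nat.gcd_eq_right hd]

namespace Matrix

variable {ι R S : Type*} [Fintype ι] [CommRing R] [CommRing S]

def IsRowCongr (q : R) (e : ι → ι → ℕ) (m : Matrix ι ι R) : Prop :=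
  (∀ i j, i ≠ j → q ^ e i j ∣ m i j) ∧ ∀ i, q ^ e i i ∣ ∑ j, m i j - 1

variable {q : R} {e : ι → ι → ℕ}

theorem isRowCongr_one [DecidableEq ι] : IsRowCongr q e (1 : Matrix ι ι R) := by
  refine ⟨fun i j hij => by simp [one_apply_ne hij], fun i => ?_⟩
  simp [one_apply]

theorem IsRowCongr.mono {e' : ι → ι → ℕ} {m : Matrix ι ι R} (h : IsRowCongr q e' m)
    (he : e ≤ e') : IsRowCongr q e m :=
  ⟨fun i j hij => (pow_dvd_pow q (he i j)).trans (h.1 i j hij),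
    fun i => (pow_dvd_pow q (he i i)).trans (h.2 i)⟩

theorem isRowCongr_map_iff {f : R →+* S} (hf : Function.Surjective f)
    (hker : ∀ i j, RingHom.ker f ≤ Ideal.span {q ^ e i j}) (m : Matrix ι ι R) :
    IsRowCongr (f q) e (m.map f) ↔ IsRowCongr q e m := by
  have key {i j : ι} {x : R} : f q ^ e i j ∣ f x ↔ q ^ e i j ∣ x := by
    rw [← map_pow]; exact RingHom.map_dvd_map_iff hf (hker i j)
  have hsum (i : ι) : ∑ j, f (m i j) - 1 = f (∑ j, m i j - 1) := by
    rw [map_sub, map_sum, map_one]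
  simp only [IsRowCongr, map_apply, hsum, key]

theorem IsRowCongr.isUnit [DecidableEq ι] [IsLocalRing R]
    (hq : q ∈ IsLocalRing.maximalIdeal R) (he : ∀ i j, 1 ≤ e i j) {m : Matrix ι ι R}
    (hm : IsRowCongr q e m) : IsUnit m := by
  set π := IsLocalRing.residue R
  have hπ {i j : ι} {x : R} (hx : q ^ e i j ∣ x) : π x = 0 := by
    rw [IsLocalRing.residue_eq_zero_iff]
    exact Ideal.mem_of_dvd _ ((dvd_pow_self q (Nat.one_le_iff_ne_zero.mp (he i j))).trans hx) hq
  have hoff {i j : ι} (hij : i ≠ j) : π (m i j) = 0 := hπ (hm.1 i j hij)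
  have hdiag (i : ι) : π (m i i) = 1 := by
    have hrow := hπ (hm.2 i)
    rwa [map_sub, map_sum, map_one, sub_eq_zero,
      sum_eq_single i (fun j _ hji => hoff hji.symm) (by simp)] at hrow
  have hmap : m.map π = 1 := by
    ext i j
    rcases eq_or_ne i j with rfl | hij
    · simp [hdiag]
    · simp [hoff hij, one_apply_ne hij]
  rw [isUnit_iff_isUnit_det]
  refine IsUnit.of_map π _ ?_
  rw [RingHom.map_det, RingHom.mapMatrix_apply, hmap, det_one]
  exact isUnit_one

section Counting

variable [DecidableEq ι]

def rowSumShear (i : ι) : (ι → R) ≃ (ι → R) where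
  toFun v := Function.update v i (∑ j, v j - 1)
  invFun w := Function.update w i (w i + 1 - ∑ j ∈ univ.erase i, w j)
  left_inv v := by
    dsimp only
    rw [Function.update_idem, Function.update_self,
      sum_update_of_notMem (notMem_erase i _), ← add_sum_erase _ _ (mem_univ i)]
    exact Function.update_eq_self_iff.mpr (by ring)
  right_inv w := by
    dsimp only
    rw [← add_sum_erase _ _ (mem_univ i), Function.update_self,
      sum_update_of_notMem (notMem_erase i _), Function.update_idem]
    exact Function.update_eq_self_iff.mpr (by ring)

def rowCongrEquiv (q : R) (e : ι → ℕ) (i : ι) :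
    {v : ι → R // (∀ j, i ≠ j → q ^ e j ∣ v j) ∧ q ^ e i ∣ ∑ j, v j - 1} ≃
      {w : ι → R // ∀ j, q ^ e j ∣ w j} :=
  (rowSumShear i).subtypeEquiv fun v => by
    simp only [rowSumShear, Equiv.coe_fn_mk, Function.forall_update_iff, ne_comm (a := i)]
    exact and_comm

theorem card_isRowCongr (q : R) (e : ι → ι → ℕ) :
    Nat.card {m : Matrix ι ι R // IsRowCongr q e m} =
      ∏ i, ∏ j, Nat.card {x : R // q ^ e i j ∣ x} := by
  have hrows : {m : Matrix ι ι R // IsRowCongr q e m} ≃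
      ∀ i, {v : ι → R // (∀ j, i ≠ j → q ^ e i j ∣ v j) ∧
        q ^ e i i ∣ ∑ j, v j - 1} :=
    (Equiv.subtypeEquivRight fun m => by simp only [IsRowCongr, ← forall_and]).trans
      (Equiv.subtypePiEquivPi (p := fun i (v : ι → R) =>
        (∀ j, i ≠ j → q ^ e i j ∣ v j) ∧ q ^ e i i ∣ ∑ j, v j - 1))
  rw [Nat.card_congr hrows, Nat.card_pi]
  refine prod_congr rfl fun i _ => ?_
  rw [Nat.card_congr ((rowCongrEquiv q (e i) i).trans Equiv.subtypePiEquivPi), Nat.card_pi]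

end Counting

end Matrix

namespace PadicInt

open Matrix

variable {p : ℕ} [Fact p.Prime] {ι : Type*} [Fintype ι] {e : ι → ι → ℕ} {N : ℕ}

theorem toZModPow_surjective (N : ℕ) : Function.Surjective (toZModPow (p := p) N) := fun x =>
  ⟨(x.val : ℤ_[p]), by rw [map_natCast, ZMod.natCast_zmod_val]⟩

theorem isRowCongr_map_toZModPow_iff (heN : ∀ i j, e i j ≤ N) (m : Matrix ι ι ℤ_[p]) :
    IsRowCongr (p : ZMod (p ^ N)) e (m.map (toZModPow N)) ↔ IsRowCongr (p : ℤ_[p]) e m := by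
  have hker (i j : ι) : RingHom.ker (toZModPow N) ≤ Ideal.span {(p : ℤ_[p]) ^ e i j} := by
    rw [ker_toZModPow, Ideal.span_singleton_le_span_singleton]
    exact pow_dvd_pow _ (heN i j)
  simpa only [map_natCast] using isRowCongr_map_iff (toZModPow_surjective N) hker m

variable [DecidableEq ι] {K : Subgroup (GL ι ℤ_[p])}

theorem ker_map_toZModPow_le (heN : ∀ i j, e i j ≤ N)
    (hK : ∀ g, g ∈ K ↔ IsRowCongr (p : ℤ_[p]) e g) :
    (GeneralLinearGroup.map (n := ι) (toZModPow (p := p) N)).ker ≤ K := by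
  intro g hg
  have hmap : (g : Matrix ι ι ℤ_[p]).map (toZModPow N) = 1 :=
    congrArg Units.val (MonoidHom.mem_ker.mp hg)
  rw [hK, ← isRowCongr_map_toZModPow_iff heN, hmap]
  exact isRowCongr_one

theorem image_map_toZModPow (he : ∀ i j, 1 ≤ e i j) (heN : ∀ i j, e i j ≤ N)
    (hK : ∀ g, g ∈ K ↔ IsRowCongr (p : ℤ_[p]) e g) :
    Units.val '' (K.map (GeneralLinearGroup.map (toZModPow N)) : Set (GL ι (ZMod (p ^ N)))) =
      {m | IsRowCongr (p : ZMod (p ^ N)) e m} := by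
  ext m
  constructor
  · rintro ⟨_, ⟨g, hg, rfl⟩, rfl⟩
    exact (isRowCongr_map_toZModPow_iff heN (g : Matrix ι ι ℤ_[p])).mpr ((hK g).mp hg)
  · intro hm
    obtain ⟨X, rfl⟩ : ∃ X : Matrix ι ι ℤ_[p], X.map (toZModPow N) = m :=
      ⟨m.map fun x => (x.val : ℤ_[p]), by ext; simp⟩
    have hX := (isRowCongr_map_toZModPow_iff heN X).mp hm
    have hp : (p : ℤ_[p]) ∈ IsLocalRing.maximalIdeal ℤ_[p] := by
      rw [maximalIdeal_eq_span_p]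
      exact Ideal.mem_span_singleton_self _
    exact ⟨_, ⟨(hX.isUnit hp he).unit, (hK _).mpr hX, rfl⟩, rfl⟩

theorem card_map_toZModPow (he : ∀ i j, 1 ≤ e i j) (heN : ∀ i j, e i j ≤ N)
    (hK : ∀ g, g ∈ K ↔ IsRowCongr (p : ℤ_[p]) e g) :
    Nat.card (K.map (GeneralLinearGroup.map (toZModPow N))) = p ^ ∑ i, ∑ j, (N - e i j) := by
  have himage := Nat.card_image_of_injective Units.val_injective
    (K.map (GeneralLinearGroup.map (toZModPow N)) : Set (GL ι (ZMod (p ^ N))))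
  rw [image_map_toZModPow he heN hK, Set.coe_ofPred, card_isRowCongr] at himage
  rw [← SetLike.coe_sort_coe, ← himage, ← prod_pow_eq_pow_sum]
  refine prod_congr rfl fun i _ => ?_
  rw [← prod_pow_eq_pow_sum]
  refine prod_congr rfl fun j _ => ?_
  rw [← Nat.cast_pow, ZMod.card_natCast_dvd (pow_dvd_pow p (heN i j)),
    Nat.pow_div (heN i j) (Fact.out : p.Prime).pos]

theorem relIndex_eq_of_isRowCongr {e e' : ι → ι → ℕ} (he : ∀ i j, 1 ≤ e i j)
    (hee' : e ≤ e') {K K' : Subgroup (GL ι ℤ_[p])}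
    (hK : ∀ g, g ∈ K ↔ IsRowCongr (p : ℤ_[p]) e g)
    (hK' : ∀ g, g ∈ K' ↔ IsRowCongr (p : ℤ_[p]) e' g) :
    K' ≤ K ∧ K'.relIndex K = p ^ ∑ i, ∑ j, (e' i j - e i j) := by
  have hle : K' ≤ K := fun g hg => (hK g).mpr (((hK' g).mp hg).mono hee')
  refine ⟨hle, ?_⟩
  set N := univ.sup fun x : ι × ι => e' x.1 x.2
  have heN' (i j : ι) : e' i j ≤ N :=
    le_sup (f := fun x : ι × ι => e' x.1 x.2) (mem_univ (i, j))
  have heN (i j : ι) : e i j ≤ N := (hee' i j).trans (heN' i j)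
  set red := GeneralLinearGroup.map (n := ι) (toZModPow (p := p) N)
  have hindex : Nat.card (K'.map red) * K'.relIndex K = Nat.card (K.map red) := by
    rw [← Subgroup.relIndex_ker, ← Subgroup.relIndex_ker,
      Subgroup.relIndex_mul_relIndex _ _ _ (ker_map_toZModPow_le heN' hK') hle]
  have hexp :
      ∑ i, ∑ j, (N - e i j) = ∑ i, ∑ j, (N - e' i j) + ∑ i, ∑ j, (e' i j - e i j) := by
    simp only [← sum_add_distrib]
    exact sum_congr rfl fun i _ => sum_congr rfl fun j _ => by
      have h₁ := heN' i j; have h₂ : e i j ≤ e' i j := hee' i j; omega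
  rw [card_map_toZModPow (fun i j => (he i j).trans (hee' i j)) heN' hK',
    card_map_toZModPow he heN hK, hexp, pow_add] at hindex
  exact Nat.eq_of_mul_eq_mul_left (pow_pos (Fact.out : p.Prime).pos _) hindex

end PadicInt

open Matrix

-- Indices start at `0`, so the diagonal exponent `i + 1` is the paper's `i`.
def congrExponent (i j : ℕ) : ℕ := if i = j then i + 1 else ((i : ℤ) - j).natAbs

theorem one_le_congrExponent (i j : ℕ) : 1 ≤ congrExponent i j := by
  unfold congrExponent
  split_ifs with h <;> omega

theorem two_mul_sum_natAbs_sub (m : ℕ) :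
    2 * ∑ j ∈ range m, ((m : ℤ) - j).natAbs = m * (m + 1) := by
  induction m with
  | zero => simp
  | succ m ih =>
    rw [sum_range_succ']
    push_cast
    simp only [add_sub_add_right_eq_sub, sub_zero]
    rw [mul_add, ih, show ((m : ℤ) + 1).natAbs = m + 1 from rfl]
    ring

theorem six_mul_sum_congrExponent (n : ℕ) :
    6 * ∑ i ∈ range n, ∑ j ∈ range n, congrExponent i j = n * (n + 1) * (2 * n + 1) := by
  induction n with
  | zero => simp
  | succ m ih =>
    have hcol : ∑ i ∈ range m, congrExponent i m = ∑ j ∈ range m, ((m : ℤ) - j).natAbs :=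
      sum_congr rfl fun i hi => by
        rw [congrExponent, if_neg (mem_range.mp hi).ne, ← Int.natAbs_neg, neg_sub]
    have hrow : ∑ j ∈ range m, congrExponent m j = ∑ j ∈ range m, ((m : ℤ) - j).natAbs :=
      sum_congr rfl fun j hj => by rw [congrExponent, if_neg (mem_range.mp hj).ne']
    have hdiag : congrExponent m m = m + 1 := if_pos rfl
    rw [sum_range_succ, sum_range_succ, hdiag, hrow]
    simp only [sum_range_succ (fun j => congrExponent _ j), sum_add_distrib, hcol]
    have := two_mul_sum_natAbs_sub m
    linarith

theorem sum_fin_congrExponent (n : ℕ) :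
    ∑ i : Fin n, ∑ j : Fin n, congrExponent i j = n * (n + 1) * (2 * n + 1) / 6 := by
  rw [Fin.sum_univ_eq_sum_range (fun i => ∑ j : Fin n, congrExponent i j) n]
  simp only [Fin.sum_univ_eq_sum_range (congrExponent _) n]
  have := six_mul_sum_congrExponent n
  omega

theorem isRowCongr_congrExponent_iff {R : Type*} [CommRing R] {n : ℕ} (c : ℕ) (q : R)
    (m : Matrix (Fin n) (Fin n) R) :
    IsRowCongr q (fun i j : Fin n => congrExponent i j * c) m ↔
      (∀ i j : Fin n, i ≠ j →
          q ^ ((((i : ℕ) : ℤ) - ((j : ℕ) : ℤ)).natAbs * c) ∣ m i j) ∧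
        ∀ i : Fin n, q ^ (((i : ℕ) + 1) * c) ∣ ∑ j, m i j - 1 := by
  refine and_congr (forall₂_congr fun i j => forall_congr' fun hij => ?_)
    (forall_congr' fun i => ?_)
  · simp only [congrExponent, if_neg (Fin.val_ne_of_ne hij)]
  · simp only [congrExponent, ↓reduceIte]

theorem stmt13_general (p : ℕ) [Fact p.Prime] (c n : ℕ) (hc : 1 ≤ c)
    (Kc Kc1 : Subgroup (Matrix.GeneralLinearGroup (Fin n) ℤ_[p]))
    (hKc : ∀ g : Matrix.GeneralLinearGroup (Fin n) ℤ_[p], g ∈ Kc ↔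
      ((∀ i j : Fin n, i ≠ j →
        ((p : ℤ_[p]) ^ ((((i : ℕ) : ℤ) - ((j : ℕ) : ℤ)).natAbs * c)) ∣
          (g : Matrix (Fin n) (Fin n) ℤ_[p]) i j)
      ∧ ∀ i : Fin n, ((p : ℤ_[p]) ^ (((i : ℕ) + 1) * c)) ∣
          ((∑ j, (g : Matrix (Fin n) (Fin n) ℤ_[p]) i j) - 1)))
    (hKc1 : ∀ g : Matrix.GeneralLinearGroup (Fin n) ℤ_[p], g ∈ Kc1 ↔
      ((∀ i j : Fin n, i ≠ j →
        ((p : ℤ_[p]) ^ ((((i : ℕ) : ℤ) - ((j : ℕ) : ℤ)).natAbs * (c + 1))) ∣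
          (g : Matrix (Fin n) (Fin n) ℤ_[p]) i j)
      ∧ ∀ i : Fin n, ((p : ℤ_[p]) ^ (((i : ℕ) + 1) * (c + 1))) ∣
          ((∑ j, (g : Matrix (Fin n) (Fin n) ℤ_[p]) i j) - 1))) :
    Kc1 ≤ Kc ∧ (Kc1.subgroupOf Kc).index = p ^ (n * (n + 1) * (2 * n + 1) / 6) := by
  obtain ⟨hle, hindex⟩ := PadicInt.relIndex_eq_of_isRowCongr
    (e := fun i j : Fin n => congrExponent i j * c)
    (e' := fun i j => congrExponent i j * (c + 1))
    (fun i j => Nat.mul_le_mul (one_le_congrExponent i j) hc)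
    (fun i j => Nat.mul_le_mul_left _ (Nat.le_succ c))
    (fun g => (hKc g).trans (isRowCongr_congrExponent_iff c _ _).symm)
    (fun g => (hKc1 g).trans (isRowCongr_congrExponent_iff (c + 1) _ _).symm)
  simp only [Nat.mul_succ, Nat.add_sub_cancel_left, sum_fin_congrExponent] at hindex
  exact ⟨hle, hindex⟩

/-- The congruence conditions define subgroups `K_c ⊆ GL_n(ℤ_p)` with `K_{c+1} ⊆ K_c`
of index `p^{n(n+1)(2n+1)/6}`. -/
theorem stmt13 (p : ℕ) [Fact p.Prime] (c n : ℕ) (hc : 1 ≤ c) (hn : 0 < n)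
    (Kc Kc1 : Subgroup (Matrix.GeneralLinearGroup (Fin n) ℤ_[p]))
    (hKc : ∀ g : Matrix.GeneralLinearGroup (Fin n) ℤ_[p], g ∈ Kc ↔
      ((∀ i j : Fin n, i ≠ j →
        ((p : ℤ_[p]) ^ ((((i : ℕ) : ℤ) - ((j : ℕ) : ℤ)).natAbs * c)) ∣
          (g : Matrix (Fin n) (Fin n) ℤ_[p]) i j)
      ∧ ∀ i : Fin n, ((p : ℤ_[p]) ^ (((i : ℕ) + 1) * c)) ∣
          ((∑ j, (g : Matrix (Fin n) (Fin n) ℤ_[p]) i j) - 1)))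
    (hKc1 : ∀ g : Matrix.GeneralLinearGroup (Fin n) ℤ_[p], g ∈ Kc1 ↔
      ((∀ i j : Fin n, i ≠ j →
        ((p : ℤ_[p]) ^ ((((i : ℕ) : ℤ) - ((j : ℕ) : ℤ)).natAbs * (c + 1))) ∣
          (g : Matrix (Fin n) (Fin n) ℤ_[p]) i j)
      ∧ ∀ i : Fin n, ((p : ℤ_[p]) ^ (((i : ℕ) + 1) * (c + 1))) ∣
          ((∑ j, (g : Matrix (Fin n) (Fin n) ℤ_[p]) i j) - 1))) :
    Kc1 ≤ Kc ∧ (Kc1.subgroupOf Kc).index = p ^ (n * (n + 1) * (2 * n + 1) / 6) :=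
  stmt13_general p c n hc Kc Kc1 hKc hKc1
end

section
/- Let N be a positive integer and x, y ∈ ℤ_p ∩ ℚ_p^× nonzero p-adic integers. With [x]_N = diag(x^{N-1}, ..., x, 1), the operator 𝚅^x = ∑_{u} π(u[x]_N) (sum over u ∈ U(ℤ_p)/(U(ℤ_p) ∩ [x]_N U(ℤ_p) [x]_N^{-1})) on the U(ℤ_p)-invariants of a smooth representation π of GL_N(ℚ_p) is well-defined (independent of the choice of coset representatives), and satisfies 𝚅^{xy} = 𝚅^x ∘ 𝚅^y. -/
/-!
If `t` contracts `U` (that is, `t U t⁻¹ ≤ U`), then `U ∩ t U t⁻¹ = t U t⁻¹`, and `∑_r π(r t) v`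
over representatives `r` of `U / t U t⁻¹` does not depend on the representatives because `v` is
fixed by `t⁻¹ (t U t⁻¹) t = U`; left translation by `u ∈ U` permutes the cosets, which gives
`U`-invariance. For multiplicativity, `r₁ (t₁ r₂ t₁⁻¹)` runs over representatives of
`U / t₁t₂ U (t₁t₂)⁻¹` as `r₁, r₂` run over those of `U / t₁ U t₁⁻¹` and `U / t₂ U t₂⁻¹`, by the
tower `U ≥ t₁ U t₁⁻¹ ≥ t₁ (t₂ U t₂⁻¹) t₁⁻¹`. Finally `[x]_N` contracts the upper unitriangular
integral matrices since its diagonal entries have absolute values increasing down the diagonal.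
-/

open scoped Pointwise

namespace Subgroup

variable {G ι κ : Type*} [Group G]

def IsLeftTransversal (U H : Subgroup G) (s : Finset ι) (c : ι → G) : Prop :=
  (∀ i ∈ s, c i ∈ U) ∧ ∀ u ∈ U, ∃! i, i ∈ s ∧ (c i)⁻¹ * u ∈ H

theorem mem_conj_smul_iff {H : Subgroup G} {t g : G} :
    g ∈ MulAut.conj t • H ↔ t⁻¹ * g * t ∈ H := by
  simp [mem_pointwise_smul_iff_inv_smul_mem]

theorem eq_conj_smul_of_mem_iff {U H : Subgroup G} {t : G} (ht : MulAut.conj t • U ≤ U)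
    (hH : ∀ g, g ∈ H ↔ g ∈ U ∧ t⁻¹ * g * t ∈ U) : H = MulAut.conj t • U := by
  ext g
  rw [hH, ← mem_conj_smul_iff, ← mem_inf, inf_eq_right.2 ht]

namespace IsLeftTransversal

variable {U H K : Subgroup G}

theorem sum_eq {M : Type*} [AddCommMonoid M] {s : Finset ι} {s' : Finset κ} {c : ι → G}
    {c' : κ → G} (hs : IsLeftTransversal U H s c) (hs' : IsLeftTransversal U H s' c')
    (f : G → M) (hf : ∀ g, ∀ h ∈ H, f (g * h) = f g) :
    ∑ i ∈ s, f (c i) = ∑ j ∈ s', f (c' j) := by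
  choose φ hφs hφH using fun i (hi : i ∈ s) => (hs'.2 _ (hs.1 i hi)).exists
  choose ψ hψs hψH using fun j (hj : j ∈ s') => (hs.2 _ (hs'.1 j hj)).exists
  refine Finset.sum_bij' φ ψ hφs hψs ?_ ?_ ?_
  · intro i hi
    exact (hs.2 _ (hs'.1 _ (hφs i hi))).unique ⟨hψs _ (hφs i hi), hψH _ (hφs i hi)⟩
      ⟨hi, by simpa using inv_mem (hφH i hi)⟩
  · intro j hj
    exact (hs'.2 _ (hs.1 _ (hψs j hj))).unique ⟨hφs _ (hψs j hj), hφH _ (hψs j hj)⟩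
      ⟨hj, by simpa using inv_mem (hψH j hj)⟩
  · intro i hi
    rw [← hf (c' (φ i hi)) _ (hφH i hi), mul_inv_cancel_left]

theorem mul_left {s : Finset ι} {c : ι → G} (hs : IsLeftTransversal U H s c) {u : G}
    (hu : u ∈ U) : IsLeftTransversal U H s (fun i => u * c i) := by
  refine ⟨fun i hi => mul_mem hu (hs.1 i hi), fun w hw => ?_⟩
  simpa only [mul_inv_rev, mul_assoc] using hs.2 (u⁻¹ * w) (mul_mem (inv_mem hu) hw)

theorem conj {s : Finset ι} {c : ι → G} (hs : IsLeftTransversal U H s c) (t : G) :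
    IsLeftTransversal (MulAut.conj t • U) (MulAut.conj t • H) s (fun i => t * c i * t⁻¹) := by
  refine ⟨fun i hi => by simpa [mem_conj_smul_iff, mul_assoc] using hs.1 i hi, fun w hw => ?_⟩
  rw [mem_conj_smul_iff] at hw
  simpa [mem_conj_smul_iff, mul_assoc] using hs.2 _ hw

theorem prod {s : Finset ι} {s' : Finset κ} {c : ι → G} {c' : κ → G}
    (hs : IsLeftTransversal U K s c) (hs' : IsLeftTransversal K H s' c') (hHK : H ≤ K)
    (hKU : K ≤ U) :
    IsLeftTransversal U H (s ×ˢ s') (fun q => c q.1 * c' q.2) := by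
  refine ⟨fun q hq => ?_, fun u hu => ?_⟩
  · rw [Finset.mem_product] at hq
    exact mul_mem (hs.1 _ hq.1) (hKU (hs'.1 _ hq.2))
  obtain ⟨i, ⟨hi, hiK⟩, hi_unique⟩ := hs.2 u hu
  obtain ⟨j, ⟨hj, hjH⟩, hj_unique⟩ := hs'.2 _ hiK
  refine ⟨(i, j), ⟨Finset.mem_product.2 ⟨hi, hj⟩, by simpa [mul_assoc] using hjH⟩, ?_⟩
  rintro ⟨i', j'⟩ ⟨hq, hH⟩
  rw [Finset.mem_product] at hq
  rw [mul_inv_rev, mul_assoc] at hH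
  have hi' : i' = i := hi_unique i' ⟨hq.1, by simpa using mul_mem (hs'.1 _ hq.2) (hHK hH)⟩
  subst hi'
  rw [hj_unique j' ⟨hq.2, hH⟩]

theorem prod_conj {s₁ : Finset ι} {s₂ : Finset κ} {c₁ : ι → G} {c₂ : κ → G} {t₁ t₂ : G}
    (hs₁ : IsLeftTransversal U (MulAut.conj t₁ • U) s₁ c₁)
    (hs₂ : IsLeftTransversal U (MulAut.conj t₂ • U) s₂ c₂) (ht₁ : MulAut.conj t₁ • U ≤ U)
    (ht₂ : MulAut.conj t₂ • U ≤ U) :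
    IsLeftTransversal U (MulAut.conj (t₁ * t₂) • U) (s₁ ×ˢ s₂)
      (fun q => c₁ q.1 * (t₁ * c₂ q.2 * t₁⁻¹)) := by
  rw [map_mul, mul_smul]
  exact hs₁.prod (hs₂.conj t₁) (pointwise_smul_le_pointwise_smul_iff.2 ht₂) ht₁

end IsLeftTransversal

end Subgroup

section Hecke

variable {G L V : Type*} [Group G] [Semiring L] [AddCommMonoid V] [Module L V]

def heckeSum (π : G →* Module.End L V) (s : Finset G) (t : G) (v : V) : V :=
  ∑ r ∈ s, π (r * t) v

variable {π : G →* Module.End L V} {U : Subgroup G} {v : V}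

theorem apply_mul_mul_eq_of_mem_conj_smul (hv : ∀ u ∈ U, π u v = v) {t h : G}
    (hh : h ∈ MulAut.conj t • U) (g : G) : π (g * h * t) v = π (g * t) v := by
  rw [Subgroup.mem_conj_smul_iff] at hh
  rw [show g * h * t = g * t * (t⁻¹ * h * t) by group, map_mul, Module.End.mul_apply, hv _ hh]

theorem heckeSum_eq_of_isLeftTransversal (hv : ∀ u ∈ U, π u v = v) {t : G} {s s' : Finset G}
    (hs : U.IsLeftTransversal (MulAut.conj t • U) s id)
    (hs' : U.IsLeftTransversal (MulAut.conj t • U) s' id) :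
    heckeSum π s t v = heckeSum π s' t v :=
  hs.sum_eq hs' (fun g => π (g * t) v) fun g _ hh => apply_mul_mul_eq_of_mem_conj_smul hv hh g

theorem apply_heckeSum_of_mem (hv : ∀ u ∈ U, π u v = v) {t : G} {s : Finset G}
    (hs : U.IsLeftTransversal (MulAut.conj t • U) s id) {u : G} (hu : u ∈ U) :
    π u (heckeSum π s t v) = heckeSum π s t v := by
  have hus := hs.mul_left hu
  calc π u (heckeSum π s t v) = ∑ r ∈ s, π (u * r * t) v := by
        simp only [heckeSum, map_sum, ← Module.End.mul_apply, ← map_mul, mul_assoc]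
    _ = heckeSum π s t v :=
        hus.sum_eq hs (fun g => π (g * t) v) fun g _ hh => apply_mul_mul_eq_of_mem_conj_smul hv hh g

theorem heckeSum_mul (hv : ∀ u ∈ U, π u v = v) {t₁ t₂ : G} (ht₁ : MulAut.conj t₁ • U ≤ U)
    (ht₂ : MulAut.conj t₂ • U ≤ U)
    {s₁ s₂ s : Finset G} (hs₁ : U.IsLeftTransversal (MulAut.conj t₁ • U) s₁ id)
    (hs₂ : U.IsLeftTransversal (MulAut.conj t₂ • U) s₂ id)
    (hs : U.IsLeftTransversal (MulAut.conj (t₁ * t₂) • U) s id) :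
    heckeSum π s (t₁ * t₂) v = heckeSum π s₁ t₁ (heckeSum π s₂ t₂ v) := by
  have hprod := hs₁.prod_conj hs₂ ht₁ ht₂
  calc heckeSum π s (t₁ * t₂) v
      = ∑ q ∈ s₁ ×ˢ s₂, π (q.1 * (t₁ * q.2 * t₁⁻¹) * (t₁ * t₂)) v :=
        hs.sum_eq hprod (fun g => π (g * (t₁ * t₂)) v)
          fun g _ hh => apply_mul_mul_eq_of_mem_conj_smul hv hh g
    _ = heckeSum π s₁ t₁ (heckeSum π s₂ t₂ v) := by
        simp only [Finset.sum_product, heckeSum, map_sum, ← Module.End.mul_apply, ← map_mul]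
        congr! 3 with r _ r' _
        group

end Hecke

section Unitriangular

open Matrix

variable {n K : Type*}

def IsUnitriangularIntegral [LinearOrder n] [NormedDivisionRing K] (g : Matrix n n K) : Prop :=
  (∀ i j, ‖g i j‖ ≤ 1) ∧ g.BlockTriangular id ∧ ∀ i, g i i = 1

theorem IsUnitriangularIntegral.diagonal_mul_mul_diagonal_inv [Fintype n] [DecidableEq n]
    [LinearOrder n] [NormedDivisionRing K] {g : Matrix n n K} (hg : IsUnitriangularIntegral g)
    {d : n → K} (hd0 : ∀ i, d i ≠ 0) (hd : Monotone fun i => ‖d i‖) :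
    IsUnitriangularIntegral (diagonal d * g * diagonal d⁻¹) := by
  obtain ⟨hg_norm, hg_tri, hg_diag⟩ := hg
  have entry : ∀ i j, (diagonal d * g * diagonal d⁻¹) i j = d i * g i j * (d j)⁻¹ := by
    intro i j
    rw [mul_diagonal, diagonal_mul, Pi.inv_apply]
  refine ⟨fun i j => ?_, (blockTriangular_diagonal d).mul hg_tri |>.mul
    (blockTriangular_diagonal _), fun i => by rw [entry, hg_diag, mul_one, mul_inv_cancel₀ (hd0 i)]⟩
  rcases lt_or_ge j i with hji | hij
  · rw [entry, hg_tri hji, mul_zero, zero_mul, norm_zero]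
    exact zero_le_one
  · rw [entry, norm_mul, norm_mul, norm_inv, mul_right_comm, ← div_eq_mul_inv]
    exact mul_le_one₀ ((div_le_one (norm_pos_iff.2 (hd0 j))).2 (hd hij)) (norm_nonneg _)
      (hg_norm i j)

theorem Matrix.GeneralLinearGroup.val_inv_of_val_eq_diagonal [Fintype n] [DecidableEq n]
    [DivisionRing K] {t : GL n K} {d : n → K} (hd0 : ∀ i, d i ≠ 0)
    (ht : (t : Matrix n n K) = diagonal d) :
    ((t⁻¹ : GL n K) : Matrix n n K) = diagonal d⁻¹ := by
  refine Units.inv_eq_of_mul_eq_one_right ?_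
  rw [ht, diagonal_mul_diagonal, ← diagonal_one]
  exact congrArg diagonal (funext fun i => mul_inv_cancel₀ (hd0 i))

theorem conj_smul_le_of_val_eq_diagonal [Fintype n] [DecidableEq n] [LinearOrder n]
    [NormedDivisionRing K] {U : Subgroup (GL n K)}
    (hU : ∀ g, g ∈ U ↔ IsUnitriangularIntegral (g : Matrix n n K)) {t : GL n K} {d : n → K}
    (hd0 : ∀ i, d i ≠ 0) (hd : Monotone fun i => ‖d i‖) (ht : (t : Matrix n n K) = diagonal d) :
    MulAut.conj t • U ≤ U := by
  intro g hg
  obtain ⟨h, hh, rfl⟩ := (Subgroup.mem_smul_pointwise_iff_exists _ _ _).1 hg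
  rw [hU, MulAut.smul_def, MulAut.conj_apply, Units.val_mul, Units.val_mul,
    Matrix.GeneralLinearGroup.val_inv_of_val_eq_diagonal hd0 ht, ht]
  exact ((hU h).1 hh).diagonal_mul_mul_diagonal_inv hd0 hd

theorem monotone_norm_pow_sub [NormedDivisionRing K] {x : K} (hx : ‖x‖ ≤ 1) (N : ℕ) :
    Monotone fun i : Fin N => ‖x ^ (N - 1 - (i : ℕ))‖ := by
  intro i j hij
  simp only [norm_pow]
  exact pow_le_pow_of_le_one (norm_nonneg x) hx (by omega)

end Unitriangular

theorem stmt14_general (p : ℕ) [Fact p.Prime] (N : ℕ)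
    (L V : Type*) [Field L] [AddCommGroup V] [Module L V]
    (π : Matrix.GeneralLinearGroup (Fin N) ℚ_[p] →* (V →ₗ[L] V))
    (UZ : Subgroup (Matrix.GeneralLinearGroup (Fin N) ℚ_[p]))
    (hUZ : ∀ g, g ∈ UZ ↔
      (∀ i j : Fin N, ‖(g : Matrix (Fin N) (Fin N) ℚ_[p]) i j‖ ≤ 1)
      ∧ (∀ i j : Fin N, (j : ℕ) < (i : ℕ) → (g : Matrix (Fin N) (Fin N) ℚ_[p]) i j = 0)
      ∧ (∀ i : Fin N, (g : Matrix (Fin N) (Fin N) ℚ_[p]) i i = 1))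
    (x y : ℚ_[p]) (hx : ‖x‖ ≤ 1 ∧ x ≠ 0) (hy : ‖y‖ ≤ 1 ∧ y ≠ 0)
    (tx ty txy : Matrix.GeneralLinearGroup (Fin N) ℚ_[p])
    (htx : ∀ i j : Fin N, (tx : Matrix (Fin N) (Fin N) ℚ_[p]) i j
      = if i = j then x ^ (N - 1 - (i : ℕ)) else 0)
    (hty : ∀ i j : Fin N, (ty : Matrix (Fin N) (Fin N) ℚ_[p]) i j
      = if i = j then y ^ (N - 1 - (i : ℕ)) else 0)
    (htxy : ∀ i j : Fin N, (txy : Matrix (Fin N) (Fin N) ℚ_[p]) i j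
      = if i = j then (x * y) ^ (N - 1 - (i : ℕ)) else 0)
    (Ux Uy Uxy : Subgroup (Matrix.GeneralLinearGroup (Fin N) ℚ_[p]))
    (hUx : ∀ g, g ∈ Ux ↔ g ∈ UZ ∧ tx⁻¹ * g * tx ∈ UZ)
    (hUy : ∀ g, g ∈ Uy ↔ g ∈ UZ ∧ ty⁻¹ * g * ty ∈ UZ)
    (hUxy : ∀ g, g ∈ Uxy ↔ g ∈ UZ ∧ txy⁻¹ * g * txy ∈ UZ)
    (v : V) (hv : ∀ u ∈ UZ, π u v = v)
    (s₁ s₂ sy sxy : Finset (Matrix.GeneralLinearGroup (Fin N) ℚ_[p]))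
    (hs₁ : (∀ r ∈ s₁, r ∈ UZ) ∧ ∀ u ∈ UZ, ∃! r, r ∈ s₁ ∧ r⁻¹ * u ∈ Ux)
    (hs₂ : (∀ r ∈ s₂, r ∈ UZ) ∧ ∀ u ∈ UZ, ∃! r, r ∈ s₂ ∧ r⁻¹ * u ∈ Ux)
    (hsy : (∀ r ∈ sy, r ∈ UZ) ∧ ∀ u ∈ UZ, ∃! r, r ∈ sy ∧ r⁻¹ * u ∈ Uy)
    (hsxy : (∀ r ∈ sxy, r ∈ UZ) ∧ ∀ u ∈ UZ, ∃! r, r ∈ sxy ∧ r⁻¹ * u ∈ Uxy) :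
    (∑ r ∈ s₁, π (r * tx) v = ∑ r ∈ s₂, π (r * tx) v)
    ∧ (∀ u ∈ UZ, π u (∑ r ∈ s₁, π (r * tx) v) = ∑ r ∈ s₁, π (r * tx) v)
    ∧ (∑ r ∈ sxy, π (r * txy) v
        = ∑ r ∈ s₁, ∑ r' ∈ sy, π (r * tx * (r' * ty)) v) := by
  have val_eq_diagonal : ∀ (z : ℚ_[p]) (t : GL (Fin N) ℚ_[p]),
      (∀ i j : Fin N, (t : Matrix (Fin N) (Fin N) ℚ_[p]) i j
        = if i = j then z ^ (N - 1 - (i : ℕ)) else 0) →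
      (t : Matrix (Fin N) (Fin N) ℚ_[p]) = Matrix.diagonal fun i : Fin N => z ^ (N - 1 - (i : ℕ)) :=
    fun z t ht => Matrix.ext fun i j => by rw [ht, Matrix.diagonal_apply]
  have conj_smul_le : ∀ (z : ℚ_[p]), ‖z‖ ≤ 1 ∧ z ≠ 0 → ∀ t : GL (Fin N) ℚ_[p],
      (∀ i j : Fin N, (t : Matrix (Fin N) (Fin N) ℚ_[p]) i j
        = if i = j then z ^ (N - 1 - (i : ℕ)) else 0) → MulAut.conj t • UZ ≤ UZ :=
    fun z hz t ht => conj_smul_le_of_val_eq_diagonal hUZ (fun i => pow_ne_zero _ hz.2)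
      (monotone_norm_pow_sub hz.1 N) (val_eq_diagonal z t ht)
  have hxy : ‖x * y‖ ≤ 1 ∧ x * y ≠ 0 :=
    ⟨norm_mul x y ▸ mul_le_one₀ hx.1 (norm_nonneg y) hy.1, mul_ne_zero hx.2 hy.2⟩
  have htx_le := conj_smul_le x hx tx htx
  have hty_le := conj_smul_le y hy ty hty
  obtain rfl := Subgroup.eq_conj_smul_of_mem_iff htx_le hUx
  obtain rfl := Subgroup.eq_conj_smul_of_mem_iff hty_le hUy
  obtain rfl := Subgroup.eq_conj_smul_of_mem_iff (conj_smul_le _ hxy txy htxy) hUxy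
  have htxy_eq : txy = tx * ty := Units.ext <| by
    rw [Units.val_mul, val_eq_diagonal _ _ htxy, val_eq_diagonal _ _ htx, val_eq_diagonal _ _ hty,
      Matrix.diagonal_mul_diagonal]
    simp only [mul_pow]
  subst htxy_eq
  refine ⟨heckeSum_eq_of_isLeftTransversal hv hs₁ hs₂,
    fun u hu => apply_heckeSum_of_mem hv hs₁ hu, ?_⟩
  simpa only [heckeSum, map_sum, ← Module.End.mul_apply, ← map_mul] using
    heckeSum_mul hv htx_le hty_le hs₁ hsy hsxy

/-- The ordinary Hecke operator `𝚅^x = ∑_u π(u [x]_N)` on `U(ℤ_p)`-invariant vectors is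
well defined (independent of coset representatives), preserves the invariants, and
satisfies `𝚅^{xy} = 𝚅^x ∘ 𝚅^y`. -/
theorem stmt14 (p : ℕ) [Fact p.Prime] (N : ℕ) (hN : 0 < N)
    (L V : Type*) [Field L] [CharZero L] [AddCommGroup V] [Module L V]
    (π : Matrix.GeneralLinearGroup (Fin N) ℚ_[p] →* (V →ₗ[L] V))
    (UZ : Subgroup (Matrix.GeneralLinearGroup (Fin N) ℚ_[p]))
    (hUZ : ∀ g, g ∈ UZ ↔
      (∀ i j : Fin N, ‖(g : Matrix (Fin N) (Fin N) ℚ_[p]) i j‖ ≤ 1)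
      ∧ (∀ i j : Fin N, (j : ℕ) < (i : ℕ) → (g : Matrix (Fin N) (Fin N) ℚ_[p]) i j = 0)
      ∧ (∀ i : Fin N, (g : Matrix (Fin N) (Fin N) ℚ_[p]) i i = 1))
    (x y : ℚ_[p]) (hx : ‖x‖ ≤ 1 ∧ x ≠ 0) (hy : ‖y‖ ≤ 1 ∧ y ≠ 0)
    (tx ty txy : Matrix.GeneralLinearGroup (Fin N) ℚ_[p])
    (htx : ∀ i j : Fin N, (tx : Matrix (Fin N) (Fin N) ℚ_[p]) i j
      = if i = j then x ^ (N - 1 - (i : ℕ)) else 0)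
    (hty : ∀ i j : Fin N, (ty : Matrix (Fin N) (Fin N) ℚ_[p]) i j
      = if i = j then y ^ (N - 1 - (i : ℕ)) else 0)
    (htxy : ∀ i j : Fin N, (txy : Matrix (Fin N) (Fin N) ℚ_[p]) i j
      = if i = j then (x * y) ^ (N - 1 - (i : ℕ)) else 0)
    (Ux Uy Uxy : Subgroup (Matrix.GeneralLinearGroup (Fin N) ℚ_[p]))
    (hUx : ∀ g, g ∈ Ux ↔ g ∈ UZ ∧ tx⁻¹ * g * tx ∈ UZ)
    (hUy : ∀ g, g ∈ Uy ↔ g ∈ UZ ∧ ty⁻¹ * g * ty ∈ UZ)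
    (hUxy : ∀ g, g ∈ Uxy ↔ g ∈ UZ ∧ txy⁻¹ * g * txy ∈ UZ)
    (v : V) (hv : ∀ u ∈ UZ, π u v = v)
    (s₁ s₂ sy sxy : Finset (Matrix.GeneralLinearGroup (Fin N) ℚ_[p]))
    (hs₁ : (∀ r ∈ s₁, r ∈ UZ) ∧ ∀ u ∈ UZ, ∃! r, r ∈ s₁ ∧ r⁻¹ * u ∈ Ux)
    (hs₂ : (∀ r ∈ s₂, r ∈ UZ) ∧ ∀ u ∈ UZ, ∃! r, r ∈ s₂ ∧ r⁻¹ * u ∈ Ux)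
    (hsy : (∀ r ∈ sy, r ∈ UZ) ∧ ∀ u ∈ UZ, ∃! r, r ∈ sy ∧ r⁻¹ * u ∈ Uy)
    (hsxy : (∀ r ∈ sxy, r ∈ UZ) ∧ ∀ u ∈ UZ, ∃! r, r ∈ sxy ∧ r⁻¹ * u ∈ Uxy) :
    (∑ r ∈ s₁, π (r * tx) v = ∑ r ∈ s₂, π (r * tx) v)
    ∧ (∀ u ∈ UZ, π u (∑ r ∈ s₁, π (r * tx) v) = ∑ r ∈ s₁, π (r * tx) v)
    ∧ (∑ r ∈ sxy, π (r * txy) v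
        = ∑ r ∈ s₁, ∑ r' ∈ sy, π (r * tx * (r' * ty)) v) :=
  stmt14_general p N L V π UZ hUZ x y hx hy tx ty txy htx hty htxy Ux Uy Uxy hUx hUy hUxy v hv s₁ s₂
    sy sxy hs₁ hs₂ hsy hsxy
end
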